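/- arXiv:1511.06791 — 7 statements merged into one kernel-verified Lean document; each statement's English description precedes it below -/
import Mathlib

section
/- Fix an integer m > 1. For every nonnegative integer i and every j with 0 ≤ j ≤ m−1, the number of m-ary partitions satisfies b(m·(m·i + j)) ≡ (j+1)·b(m·i) (mod m). -/
open Multiset

/-- The number of `m`-ary partitions of `n`: partitions of `n` all of whose
parts are powers of `m`. -/
noncomputable def maryPartitions (m n : ℕ) : ℕ :=
  Nat.card {p : n.Partition // ∀ x ∈ p.parts, ∃ k : ℕ, x = m ^ k}

namespace MaryAux

def IsMary (m : ℕ) {n : ℕ} (p : n.Partition) : Prop := ∀ x ∈ p.parts, ∃ k : ℕ, x = m ^ k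

lemma card_def (m n : ℕ) : maryPartitions m n = Nat.card {p : n.Partition // IsMary m p} := rfl

variable {m : ℕ}

/-- Removing a part equal to 1. -/
def eraseOne (m n : ℕ) :
    {p : (n+1).Partition // IsMary m p ∧ 1 ∈ p.parts} ≃ {p : n.Partition // IsMary m p} where
  toFun q := ⟨⟨q.1.parts.erase 1, fun hi => q.1.parts_pos (mem_of_mem_erase hi), by
      have h := q.1.parts_sum
      have h1 : (1 : ℕ) ∈ q.1.parts := q.2.2
      have h2 : ((1:ℕ) ::ₘ q.1.parts.erase 1).sum = n + 1 := by
        rw [cons_erase h1, h]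
      rw [sum_cons] at h2
      omega⟩,
    fun x hx => q.2.1 x (mem_of_mem_erase hx)⟩
  invFun p := ⟨⟨(1 : ℕ) ::ₘ p.1.parts, by
      intro i hi
      rcases mem_cons.1 hi with h | h
      · omega
      · exact p.1.parts_pos h, by rw [sum_cons, p.1.parts_sum]; omega⟩,
    ⟨by
      intro x hx
      rcases mem_cons.1 hx with h | h
      · exact ⟨0, by simp [h]⟩
      · exact p.2 x h, mem_cons_self _ _⟩⟩
  left_inv q := by
    apply Subtype.ext; apply Nat.Partition.ext
    exact cons_erase q.2.2
  right_inv p := by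
    apply Subtype.ext; apply Nat.Partition.ext
    exact erase_cons_head _ _

/-- Multiplying every part by `m`. -/
def mulEquiv (hm : 1 < m) (n : ℕ) :
    {p : n.Partition // IsMary m p} ≃ {p : (m*n).Partition // IsMary m p ∧ 1 ∉ p.parts} where
  toFun p := ⟨⟨p.1.parts.map (fun x => m * x), by
      intro i hi
      obtain ⟨x, hx, rfl⟩ := mem_map.1 hi
      have := p.1.parts_pos hx
      positivity, by
      rw [show (fun x => m * x) = (fun x => m * id x) from rfl, sum_map_mul_left]
      simp [p.1.parts_sum]⟩, by
      constructor
      · intro x hx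
        obtain ⟨y, hy, rfl⟩ := mem_map.1 hx
        obtain ⟨k, rfl⟩ := p.2 y hy
        exact ⟨k + 1, by rw [pow_succ, mul_comm]⟩
      · intro hx
        obtain ⟨y, hy, h1⟩ := mem_map.1 hx
        have := p.1.parts_pos hy
        nlinarith⟩
  invFun q := by
    have hdvd : ∀ x ∈ q.1.parts, m ∣ x := by
      intro x hx
      obtain ⟨k, rfl⟩ := q.2.1 x hx
      rcases Nat.eq_zero_or_pos k with rfl | hk
      · exact absurd (by simpa using hx) q.2.2
      · exact dvd_pow_self m hk.ne'
    have hmap : (q.1.parts.map (fun x => x / m)).map (fun x => m * x) = q.1.parts := by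
      rw [map_map]
      rw [show q.1.parts = q.1.parts.map id by simp]
      refine map_congr (by simp) ?_
      intro x hx
      simp only [Function.comp_apply, id]
      exact Nat.mul_div_cancel' (hdvd x (by simpa using hx)) |>.symm ▸ rfl
    refine ⟨⟨q.1.parts.map (fun x => x / m), ?_, ?_⟩, ?_⟩
    · intro i hi
      obtain ⟨x, hx, rfl⟩ := mem_map.1 hi
      have h1 := q.1.parts_pos hx
      have h2 := hdvd x hx
      have : m ≤ x := Nat.le_of_dvd h1 h2
      exact Nat.div_pos this (by omega)
    · have := q.1.parts_sum
      have h2 : ((q.1.parts.map (fun x => x / m)).map (fun x => m * x)).sum = m * n := by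
        rw [hmap, this]
      rw [show (fun x => m * x) = (fun x => m * id x) from rfl, sum_map_mul_left] at h2
      simp only [Multiset.map_id] at h2
      exact Nat.eq_of_mul_eq_mul_left (by omega) h2
    · intro x hx
      obtain ⟨y, hy, rfl⟩ := mem_map.1 hx
      obtain ⟨k, rfl⟩ := q.2.1 y hy
      have hk : k ≠ 0 := by
        rintro rfl
        exact q.2.2 (by simpa using hy)
      refine ⟨k - 1, ?_⟩
      rw [show m ^ k = m * m ^ (k-1) by rw [← pow_succ']; congr 1; omega]
      rw [Nat.mul_div_cancel_left _ (by omega)]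
  left_inv p := by
    apply Subtype.ext; apply Nat.Partition.ext
    simp only [map_map]
    rw [show p.1.parts = p.1.parts.map id by simp]
    refine map_congr (by simp) ?_
    intro x hx
    simp [Nat.mul_div_cancel_left x (by omega : 0 < m)]
  right_inv q := by
    apply Subtype.ext; apply Nat.Partition.ext
    have hdvd : ∀ x ∈ q.1.parts, m ∣ x := by
      intro x hx
      obtain ⟨k, rfl⟩ := q.2.1 x hx
      rcases Nat.eq_zero_or_pos k with rfl | hk
      · exact absurd (by simpa using hx) q.2.2
      · exact dvd_pow_self m hk.ne'
    show (q.1.parts.map (fun x => x / m)).map (fun x => m * x) = q.1.parts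
    rw [map_map]
    rw [show q.1.parts = q.1.parts.map id by simp]
    refine map_congr (by simp) ?_
    intro x hx
    simp only [Function.comp_apply, id]
    exact Nat.mul_div_cancel' (hdvd x (by simpa using hx))

lemma card_split (m : ℕ) (n : ℕ) :
    maryPartitions m n
      = Nat.card {p : n.Partition // IsMary m p ∧ 1 ∈ p.parts}
        + Nat.card {p : n.Partition // IsMary m p ∧ 1 ∉ p.parts} := by
  classical
  rw [card_def, ← Nat.card_sum]
  apply Nat.card_congr
  refine Equiv.trans ?_ (Equiv.sumCongr
    (Equiv.subtypeSubtypeEquivSubtypeInter _ _)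
    (Equiv.subtypeSubtypeEquivSubtypeInter (IsMary m) (fun p => 1 ∉ p.parts)))
  exact (Equiv.sumCompl (fun p : {p : n.Partition // IsMary m p} => 1 ∈ p.1.parts)).symm

lemma mary_zero : maryPartitions m 0 = 1 := by
  rw [card_def]
  have hdef : IsMary m (default : Nat.Partition 0) := by
    intro x hx
    have h := (default : Nat.Partition 0).parts_sum
    have := (default : Nat.Partition 0).parts_pos hx
    have := Multiset.single_le_sum (fun y _ => Nat.zero_le y) x hx
    omega
  haveI : Subsingleton {p : Nat.Partition 0 // IsMary m p} :=
    ⟨fun a b => Subtype.ext (Subsingleton.elim _ _)⟩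
  haveI : Nonempty {p : Nat.Partition 0 // IsMary m p} := ⟨⟨default, hdef⟩⟩
  exact Nat.card_eq_one_iff_unique.mpr ⟨inferInstance, inferInstance⟩

lemma mary_succ_of_not_dvd (hm : 1 < m) {n : ℕ} (h : ¬ m ∣ (n+1)) :
    maryPartitions m (n+1) = maryPartitions m n := by
  rw [card_def, card_def]
  have key : ∀ p : (n+1).Partition, IsMary m p → (1 : ℕ) ∈ p.parts := by
    intro p hp
    by_contra h1
    apply h
    rw [← p.parts_sum]
    apply Multiset.dvd_sum
    intro x hx
    obtain ⟨k, rfl⟩ := hp x hx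
    rcases Nat.eq_zero_or_pos k with rfl | hk
    · exact absurd (by simpa using hx) h1
    · exact dvd_pow_self m hk.ne'
  have e1 : {p : (n+1).Partition // IsMary m p}
      ≃ {p : (n+1).Partition // IsMary m p ∧ 1 ∈ p.parts} :=
    Equiv.subtypeEquivRight (fun p => ⟨fun hp => ⟨hp, key p hp⟩, fun hp => hp.1⟩)
  exact Nat.card_congr (e1.trans (eraseOne m n))

lemma mary_mul_succ (hm : 1 < m) (n : ℕ) :
    maryPartitions m (m * (n+1)) = maryPartitions m (m * (n+1) - 1) + maryPartitions m (n+1) := by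
  rw [card_split m (m * (n+1))]
  congr 1
  · have he : m * (n+1) = (m * (n+1) - 1) + 1 :=
      (Nat.succ_pred_eq_of_pos (by positivity)).symm
    rw [card_def]
    conv_lhs => rw [he]
    exact Nat.card_congr (eraseOne m (m*(n+1)-1))
  · rw [card_def]
    exact Nat.card_congr (mulEquiv hm (n+1)).symm

lemma mary_add (hm : 1 < m) (N : ℕ) : ∀ r, r ≤ m - 1 →
    maryPartitions m (m * N + r) = maryPartitions m (m * N) := by
  intro r
  induction r with
  | zero => intro _; rfl
  | succ r ih =>
    intro hr
    have hnd : ¬ m ∣ (m * N + r + 1) := by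
      intro hd
      have h2 : m ∣ r + 1 :=
        (Nat.dvd_add_right ⟨N, rfl⟩).mp (by rwa [add_assoc] at hd)
      have := Nat.le_of_dvd (by omega) h2
      omega
    rw [show m * N + (r+1) = (m * N + r) + 1 by omega, mary_succ_of_not_dvd hm hnd,
      ih (by omega)]

noncomputable def S (m K : ℕ) : ℕ := ∑ s ∈ Finset.range (K+1), maryPartitions m s

lemma S_succ (K : ℕ) : S m (K+1) = S m K + maryPartitions m (K+1) :=
  Finset.sum_range_succ _ _

lemma sum_eq (hm : 1 < m) (N : ℕ) : maryPartitions m (m * N) = S m N := by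
  induction N with
  | zero => simp [S, mary_zero]
  | succ N ih =>
    rw [mary_mul_succ hm N, S_succ, ← ih]
    congr 1
    have h1 : m * (N+1) - 1 = m * N + (m - 1) := by rw [Nat.mul_succ]; omega
    rw [h1]
    exact mary_add hm N (m-1) le_rfl

lemma S_add (hm : 1 < m) (i : ℕ) : ∀ r, r ≤ m - 1 →
    S m (m * i + r) = S m (m * i) + r * maryPartitions m (m * i) := by
  intro r
  induction r with
  | zero => intro _; simp
  | succ r ih =>
    intro hr
    rw [show m * i + (r+1) = (m * i + r) + 1 by omega, S_succ,
      show m * i + r + 1 = m * i + (r+1) by omega, mary_add hm i (r+1) hr, ih (by omega)]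
    ring

lemma S_modeq (hm : 1 < m) (i : ℕ) : S m (m * i) ≡ maryPartitions m (m * i) [MOD m] := by
  induction i with
  | zero => simp [S, mary_zero]; rfl
  | succ i ih =>
    have h1 : m * (i+1) = m * i + (m-1) + 1 := by rw [Nat.mul_succ]; omega
    have h2 : S m (m * (i+1))
        = S m (m * i) + (m-1) * maryPartitions m (m * i) + maryPartitions m (m * (i+1)) := by
      rw [h1, S_succ, S_add hm i (m-1) le_rfl, ← h1]
    rw [h2]
    have h3 : S m (m * i) + (m-1) * maryPartitions m (m * i)
        ≡ maryPartitions m (m * i) + (m-1) * maryPartitions m (m * i) [MOD m] :=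
      Nat.ModEq.add_right _ ih
    have h4 : maryPartitions m (m * i) + (m-1) * maryPartitions m (m * i)
        = m * maryPartitions m (m * i) := by
      have hh : 1 + (m-1) = m := by omega
      calc maryPartitions m (m * i) + (m-1) * maryPartitions m (m * i)
          = (1 + (m-1)) * maryPartitions m (m * i) := by ring
        _ = m * maryPartitions m (m * i) := by rw [hh]
    have h5 : m * maryPartitions m (m * i) + maryPartitions m (m * (i+1))
        ≡ 0 + maryPartitions m (m * (i+1)) [MOD m] :=
      Nat.ModEq.add_right _ ((Nat.modEq_zero_iff_dvd).mpr ⟨_, rfl⟩)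
    calc S m (m * i) + (m-1) * maryPartitions m (m * i) + maryPartitions m (m * (i+1))
        ≡ maryPartitions m (m * i) + (m-1) * maryPartitions m (m * i)
            + maryPartitions m (m * (i+1)) [MOD m] := Nat.ModEq.add_right _ h3
      _ = m * maryPartitions m (m * i) + maryPartitions m (m * (i+1)) := by rw [h4]
      _ ≡ 0 + maryPartitions m (m * (i+1)) [MOD m] := h5
      _ = maryPartitions m (m * (i+1)) := by omega

end MaryAux

theorem mary_mod_m (m : ℕ) (hm : 1 < m) (i j : ℕ) (hj : j ≤ m - 1) :
    maryPartitions m (m * (m * i + j)) ≡ (j + 1) * maryPartitions m (m * i) [MOD m] := by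
  rw [MaryAux.sum_eq hm (m * i + j), MaryAux.S_add hm i j hj]
  calc MaryAux.S m (m * i) + j * maryPartitions m (m * i)
      ≡ maryPartitions m (m * i) + j * maryPartitions m (m * i) [MOD m] :=
        Nat.ModEq.add_right _ (MaryAux.S_modeq hm i)
    _ = (j + 1) * maryPartitions m (m * i) := by ring
end

section
/- Fix an integer m > 1. For every nonnegative integer n, the number of m-ary partitions satisfies b(m·n) ≡ ∏_{j} (d_j + 1) (mod m), where d_0, d_1, …, d_k are the digits of n in base m. -/
namespace MaryAux

/-- Partitions of 0 : the count is 1. -/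
lemma b_zero (m : ℕ) : maryPartitions m 0 = 1 := by
  have : Unique {p : (0:ℕ).Partition // ∀ x ∈ p.parts, ∃ k : ℕ, x = m ^ k} := by
    refine ⟨⟨⟨default, ?_⟩⟩, ?_⟩
    · intro x hx
      exfalso
      have : (default : (0:ℕ).Partition).parts = 0 := by
        have := Unique.eq_default (⟨0, by simp, by simp⟩ : (0:ℕ).Partition)
        rw [← this]
      rw [this] at hx
      simp at hx
    · intro a
      exact Subtype.ext (Subsingleton.elim _ _)
  rw [maryPartitions, Nat.card_unique]

/-- Erasing a `1` gives an equivalence between m-ary partitions of `n+1`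
containing a part equal to `1` and m-ary partitions of `n`. -/
def eraseOneEquiv (m n : ℕ) :
    {p : {q : (n+1).Partition // ∀ x ∈ q.parts, ∃ k : ℕ, x = m ^ k} // 1 ∈ p.1.parts}
      ≃ {p : n.Partition // ∀ x ∈ p.parts, ∃ k : ℕ, x = m ^ k} where
  toFun := fun ⟨⟨p, hpm⟩, h1⟩ =>
    ⟨⟨p.parts.erase 1,
      fun hx => p.parts_pos (Multiset.mem_of_mem_erase hx),
      by
        have hc : (1 ::ₘ p.parts.erase 1).sum = n + 1 := by
          rw [Multiset.cons_erase h1, p.parts_sum]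
        rw [Multiset.sum_cons] at hc
        omega⟩,
      fun x hx => hpm x (Multiset.mem_of_mem_erase hx)⟩
  invFun := fun ⟨p, hpm⟩ =>
    ⟨⟨⟨1 ::ₘ p.parts,
      by
        intro x hx
        rcases Multiset.mem_cons.mp hx with h | h
        · simp [h]
        · exact p.parts_pos h,
      by simp [p.parts_sum, add_comm]⟩,
      fun x hx => by
        rcases Multiset.mem_cons.mp hx with h | h
        · exact ⟨0, by simp [h]⟩
        · exact hpm x h⟩,
      Multiset.mem_cons_self 1 _⟩
  left_inv := by
    rintro ⟨⟨p, hpm⟩, h1⟩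
    apply Subtype.ext
    apply Subtype.ext
    apply Nat.Partition.ext
    simp [Multiset.cons_erase h1]
  right_inv := by
    rintro ⟨p, hpm⟩
    apply Subtype.ext
    apply Nat.Partition.ext
    simp [Multiset.erase_cons_head]


lemma pow_succ_div {m : ℕ} (hm : 1 < m) (k : ℕ) : m ^ (k + 1) / m = m ^ k := by
  rw [pow_succ, Nat.mul_div_cancel _ (by omega)]

lemma sum_map_mul (m : ℕ) (s : Multiset ℕ) : (s.map (m * ·)).sum = m * s.sum := by
  induction s using Multiset.induction with
  | empty => simp
  | cons a s ih => simp [ih, Nat.mul_add]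

lemma sum_map_div {m : ℕ} (hm : 0 < m) (s : Multiset ℕ) (h : ∀ x ∈ s, m ∣ x) :
    m * (s.map (· / m)).sum = s.sum := by
  induction s using Multiset.induction with
  | empty => simp
  | cons a s ih =>
    simp only [Multiset.map_cons, Multiset.sum_cons, Nat.mul_add]
    rw [ih (fun x hx => h x (Multiset.mem_cons_of_mem hx)),
      Nat.mul_div_cancel' (h a (Multiset.mem_cons_self a s))]

/-- Dividing all parts by `m` : m-ary partitions of `m*t` with no part equal
to `1` correspond to m-ary partitions of `t`. -/
def divEquiv (m : ℕ) (hm : 1 < m) (t : ℕ) :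
    {p : {q : (m*t).Partition // ∀ x ∈ q.parts, ∃ k : ℕ, x = m ^ k} // 1 ∉ p.1.parts}
      ≃ {p : t.Partition // ∀ x ∈ p.parts, ∃ k : ℕ, x = m ^ k} where
  toFun := fun ⟨⟨p, hpm⟩, h1⟩ =>
    ⟨⟨p.parts.map (· / m),
      by
        intro x hx
        rcases Multiset.mem_map.mp hx with ⟨y, hy, rfl⟩
        rcases hpm y hy with ⟨k, rfl⟩
        match k with
        | 0 => exact absurd (by simpa using hy) h1
        | k+1 =>
          rw [pow_succ_div hm]
          exact pow_pos (by omega) k,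
      by
        have hd : ∀ x ∈ p.parts, m ∣ x := by
          intro x hx
          rcases hpm x hx with ⟨k, rfl⟩
          match k with
          | 0 => exact absurd (by simpa using hx) h1
          | k+1 => exact dvd_pow_self m (Nat.succ_ne_zero k)
        have := sum_map_div (by omega) p.parts hd
        rw [p.parts_sum] at this
        exact Nat.eq_of_mul_eq_mul_left (by omega) this⟩,
      by
        intro x hx
        rcases Multiset.mem_map.mp hx with ⟨y, hy, rfl⟩
        rcases hpm y hy with ⟨k, rfl⟩
        match k with
        | 0 => exact absurd (by simpa using hy) h1
        | k+1 => exact ⟨k, by rw [pow_succ_div hm]⟩⟩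
  invFun := fun ⟨p, hpm⟩ =>
    ⟨⟨⟨p.parts.map (m * ·),
      by
        intro x hx
        rcases Multiset.mem_map.mp hx with ⟨y, hy, rfl⟩
        exact Nat.mul_pos (by omega) (p.parts_pos hy),
      by
        rw [sum_map_mul, p.parts_sum]⟩,
      by
        intro x hx
        rcases Multiset.mem_map.mp hx with ⟨y, hy, rfl⟩
        rcases hpm y hy with ⟨k, rfl⟩
        exact ⟨k+1, (pow_succ' m k).symm⟩⟩,
      by
        intro hmem
        rcases Multiset.mem_map.mp hmem with ⟨y, hy, hxy⟩
        have := p.parts_pos hy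
        nlinarith⟩
  left_inv := by
    rintro ⟨⟨p, hpm⟩, h1⟩
    apply Subtype.ext
    apply Subtype.ext
    apply Nat.Partition.ext
    show (p.parts.map (· / m)).map (m * ·) = p.parts
    rw [Multiset.map_map]
    rw [Multiset.map_congr rfl (fun x hx => ?_), Multiset.map_id]
    rcases hpm x hx with ⟨k, rfl⟩
    match k with
    | 0 => exact absurd (by simpa using hx) h1
    | k+1 =>
      show m * (m ^ (k+1) / m) = m ^ (k+1)
      rw [pow_succ_div hm, pow_succ, Nat.mul_comm]
  right_inv := by
    rintro ⟨p, hpm⟩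
    apply Subtype.ext
    apply Nat.Partition.ext
    show (p.parts.map (m * ·)).map (· / m) = p.parts
    rw [Multiset.map_map]
    rw [Multiset.map_congr rfl (fun x hx => ?_), Multiset.map_id]
    show m * x / m = x
    exact Nat.mul_div_cancel_left x (by omega)

/-- If `m` does not divide `N`, every m-ary partition of `N` contains a `1`. -/
lemma one_mem_of_not_dvd {m N : ℕ} (hm : 1 < m) (hnd : ¬ m ∣ N)
    (p : N.Partition) (hpm : ∀ x ∈ p.parts, ∃ k : ℕ, x = m ^ k) : 1 ∈ p.parts := by
  by_contra h1
  apply hnd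
  rw [← p.parts_sum]
  apply Multiset.dvd_sum
  intro x hx
  rcases hpm x hx with ⟨k, rfl⟩
  match k with
  | 0 => exact absurd (by simpa using hx) h1
  | k+1 => exact dvd_pow_self m (Nat.succ_ne_zero k)

/-- The master recurrence. -/
lemma key_rec (m : ℕ) (hm : 1 < m) (N : ℕ) :
    maryPartitions m (N + 1) =
      (if m ∣ (N + 1) then maryPartitions m ((N + 1) / m) else 0)
        + maryPartitions m N := by
  classical
  have e : {q : (N+1).Partition // ∀ x ∈ q.parts, ∃ k : ℕ, x = m ^ k} ≃
      {p : {q : (N+1).Partition // ∀ x ∈ q.parts, ∃ k : ℕ, x = m ^ k} // 1 ∉ p.1.parts}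
        ⊕ {p : {q : (N+1).Partition // ∀ x ∈ q.parts, ∃ k : ℕ, x = m ^ k} // 1 ∈ p.1.parts} :=
    (Equiv.sumCompl (fun p => 1 ∉ p.1.parts)).symm.trans
      (Equiv.sumCongr (Equiv.refl _) (Equiv.subtypeEquivRight (fun p => not_not)))
  rw [maryPartitions, Nat.card_congr e, Nat.card_sum]
  congr 1
  · split_ifs with hdvd
    · obtain ⟨t, ht⟩ := hdvd
      rw [ht, maryPartitions, Nat.mul_div_cancel_left t (by omega)]
      exact Nat.card_congr (divEquiv m hm t)
    · haveI : IsEmpty {p : {q : (N+1).Partition // ∀ x ∈ q.parts, ∃ k : ℕ, x = m ^ k} // 1 ∉ p.1.parts} := by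
        constructor
        rintro ⟨⟨p, hpm⟩, h1⟩
        exact h1 (one_mem_of_not_dvd hm hdvd p hpm)
      exact Nat.card_of_isEmpty
  · rw [maryPartitions]
    exact Nat.card_congr (eraseOneEquiv m N)


lemma b_const (m : ℕ) (hm : 1 < m) (q : ℕ) :
    ∀ r, r < m → maryPartitions m (m * q + r) = maryPartitions m (m * q)
  | 0, _ => rfl
  | r+1, h => by
    have h1 : (m * q + (r + 1)) % m = r + 1 := by
      rw [Nat.mul_add_mod, Nat.mod_eq_of_lt h]
    have hnd : ¬ m ∣ (m * q + r + 1) := by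
      rw [Nat.dvd_iff_mod_eq_zero, show m * q + r + 1 = m * q + (r + 1) by omega, h1]
      omega
    have hk := key_rec m hm (m * q + r)
    rw [if_neg hnd] at hk
    rw [show m * q + (r + 1) = m * q + r + 1 by omega, hk, zero_add,
      b_const m hm q r (by omega)]

lemma c_step (m : ℕ) (hm : 1 < m) (q : ℕ) :
    maryPartitions m (m * (q + 1)) = maryPartitions m (m * q) + maryPartitions m (q + 1) := by
  have hE : m * q + (m - 1) + 1 = m * (q + 1) := by
    rw [Nat.mul_succ]; omega
  have h := key_rec m hm (m * q + (m - 1))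
  rw [hE] at h
  have hdvd : m ∣ m * (q + 1) := Dvd.intro _ rfl
  rw [if_pos hdvd, Nat.mul_div_cancel_left _ (by omega : 0 < m),
    b_const m hm q (m - 1) (by omega)] at h
  omega

lemma b_eq_c (m : ℕ) (hm : 1 < m) (k : ℕ) :
    maryPartitions m k = maryPartitions m (m * (k / m)) := by
  conv_lhs => rw [← Nat.div_add_mod k m]
  exact b_const m hm (k / m) (k % m) (Nat.mod_lt _ (by omega))

noncomputable def cfun (m q : ℕ) : ℕ := maryPartitions m (m * q)

lemma crec (m : ℕ) (hm : 1 < m) (q : ℕ) :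
    cfun m (q + 1) = cfun m q + cfun m ((q + 1) / m) := by
  rw [cfun, cfun, cfun, c_step m hm q, b_eq_c m hm (q + 1)]

lemma c_add (m : ℕ) (hm : 1 < m) (q : ℕ) :
    ∀ r, r < m → cfun m (m * q + r) = cfun m (m * q) + r * cfun m q
  | 0, _ => by simp
  | r+1, h => by
    have hdiv : (m * q + r + 1) / m = q := by
      rw [show m * q + r + 1 = m * q + (r + 1) by omega, Nat.mul_add_div (by omega : 0 < m),
        Nat.div_eq_of_lt h, Nat.add_zero]
    have := crec m hm (m * q + r)
    rw [hdiv, c_add m hm q r (by omega)] at this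
    rw [show m * q + (r + 1) = m * q + r + 1 by omega, this]
    ring

lemma c_mul (m : ℕ) (hm : 1 < m) : ∀ q, cfun m (m * q) ≡ cfun m q [MOD m]
  | 0 => by rw [Nat.mul_zero]
  | q+1 => by
    have hE : m * q + (m - 1) + 1 = m * (q + 1) := by
      rw [Nat.mul_succ]; omega
    have hdiv : (m * q + (m - 1) + 1) / m = q + 1 := by
      rw [hE, Nat.mul_div_cancel_left _ (by omega : 0 < m)]
    have h1 := crec m hm (m * q + (m - 1))
    rw [hdiv, hE, c_add m hm q (m - 1) (by omega)] at h1
    rw [h1]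
    calc cfun m (m * q) + (m - 1) * cfun m q + cfun m (q + 1)
        ≡ cfun m q + (m - 1) * cfun m q + cfun m (q + 1) [MOD m] :=
          Nat.ModEq.add_right _ (Nat.ModEq.add_right _ (c_mul m hm q))
      _ = m * cfun m q + cfun m (q + 1) := by
          cases m with
          | zero => omega
          | succ m' => simp only [Nat.succ_sub_one, Nat.succ_mul]; ring
      _ ≡ 0 + cfun m (q + 1) [MOD m] :=
          Nat.ModEq.add_right _ ((Nat.modEq_zero_iff_dvd).mpr ⟨_, rfl⟩)
      _ = cfun m (q + 1) := by omega

lemma main (m : ℕ) (hm : 1 < m) :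
    ∀ n, cfun m n ≡ ((Nat.digits m n).map (· + 1)).prod [MOD m] := by
  intro n
  induction n using Nat.strong_induction_on with
  | _ n ih =>
    rcases Nat.eq_zero_or_pos n with rfl | hn
    · show cfun m 0 ≡ _ [MOD m]
      rw [cfun, Nat.mul_zero, b_zero, Nat.digits_zero]
      rfl
    · have hd := Nat.digits_def' hm hn
      rw [hd]
      have h1 : cfun m n = cfun m (m * (n / m)) + (n % m) * cfun m (n / m) := by
        conv_lhs => rw [← Nat.div_add_mod n m]
        exact c_add m hm (n / m) (n % m) (Nat.mod_lt _ (by omega))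
      rw [h1]
      have ihq := ih (n / m) (Nat.div_lt_self hn hm)
      calc cfun m (m * (n / m)) + (n % m) * cfun m (n / m)
          ≡ cfun m (n / m) + (n % m) * cfun m (n / m) [MOD m] :=
            Nat.ModEq.add_right _ (c_mul m hm (n / m))
        _ = (n % m + 1) * cfun m (n / m) := by ring
        _ ≡ (n % m + 1) * ((Nat.digits m (n / m)).map (· + 1)).prod [MOD m] :=
            Nat.ModEq.mul_left _ ihq
        _ = ((n % m :: Nat.digits m (n / m)).map (· + 1)).prod := by
            simp [List.prod_cons]

end MaryAux

theorem mary_mod_m_digits (m : ℕ) (hm : 1 < m) (n : ℕ) :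
    maryPartitions m (m * n) ≡ ((Nat.digits m n).map (· + 1)).prod [MOD m] := by
  exact MaryAux.main m hm n
end

section
/- Fix an integer m > 1. For every nonnegative integer n, the number of m-ary partitions satisfies b(m·n) = ∑_{k=0}^{n} b(k). -/
open Multiset

lemma card_split {α : Type*} [Fintype α] (P Q : α → Prop) :
    Nat.card {x // P x} = Nat.card {x // P x ∧ Q x} + Nat.card {x // P x ∧ ¬ Q x} := by
  classical
  simp only [Nat.card_eq_fintype_card, Fintype.card_subtype]
  rw [← Finset.card_filter_add_card_filter_not (s := Finset.univ.filter P) Q]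
  simp [Finset.filter_filter]

section
variable {m : ℕ}

-- E2 : multiply by m
def mulEquiv (n : ℕ) (hm : 1 < m) :
    {p : n.Partition // ∀ x ∈ p.parts, ∃ k : ℕ, x = m ^ k} ≃
    {p : (m * n).Partition // (∀ x ∈ p.parts, ∃ k : ℕ, x = m ^ k) ∧ 1 ∉ p.parts} where
  toFun q := ⟨⟨q.1.parts.map (m * ·), by
      intro i hi
      obtain ⟨y, hy, rfl⟩ := Multiset.mem_map.mp hi
      exact Nat.mul_pos (by omega) (q.1.parts_pos hy), by
      rw [Multiset.sum_map_mul_left, Multiset.map_id', q.1.parts_sum]⟩, by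
    constructor
    · intro x hx
      obtain ⟨y, hy, rfl⟩ := Multiset.mem_map.mp hx
      obtain ⟨k, rfl⟩ := q.2 y hy
      exact ⟨k + 1, (pow_succ' m k).symm⟩
    · intro h1
      obtain ⟨y, hy, hxy⟩ := Multiset.mem_map.mp h1
      have := q.1.parts_pos hy
      nlinarith⟩
  invFun p := ⟨⟨p.1.parts.map (· / m), by
      intro i hi
      obtain ⟨y, hy, rfl⟩ := Multiset.mem_map.mp hi
      obtain ⟨k, rfl⟩ := p.2.1 y hy
      rcases Nat.eq_zero_or_pos k with rfl | hk
      · exact absurd (by simpa using hy) p.2.2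
      · have : m ≤ m ^ k := Nat.le_self_pow (by omega) m
        exact Nat.div_pos this (by omega), by
      have hd : ∀ y ∈ p.1.parts, m ∣ y := by
        intro y hy
        obtain ⟨k, rfl⟩ := p.2.1 y hy
        rcases Nat.eq_zero_or_pos k with rfl | hk
        · exact absurd (by simpa using hy) p.2.2
        · exact dvd_pow_self m (by omega)
      have : m * (p.1.parts.map (· / m)).sum = m * n := by
        rw [← Multiset.sum_map_mul_left,
          Multiset.map_congr rfl (fun y hy => Nat.mul_div_cancel' (hd y hy)), Multiset.map_id',
          p.1.parts_sum]
      exact Nat.eq_of_mul_eq_mul_left (by omega) this⟩, by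
    intro x hx
    obtain ⟨y, hy, rfl⟩ := Multiset.mem_map.mp hx
    obtain ⟨k, rfl⟩ := p.2.1 y hy
    rcases Nat.eq_zero_or_pos k with rfl | hk
    · exact absurd (by simpa using hy) p.2.2
    · refine ⟨k - 1, ?_⟩
      simpa using Nat.pow_div (show 1 ≤ k by omega) (show 0 < m by omega)⟩
  left_inv q := by
    apply Subtype.ext; apply Nat.Partition.ext
    simp only [Multiset.map_map]
    rw [Multiset.map_congr rfl fun y hy => ?_, Multiset.map_id']
    simp [Nat.mul_div_cancel_left _ (by omega : 0 < m)]
  right_inv p := by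
    apply Subtype.ext; apply Nat.Partition.ext
    simp only [Multiset.map_map]
    rw [Multiset.map_congr rfl fun y hy => ?_, Multiset.map_id']
    have : m ∣ y := by
      obtain ⟨k, rfl⟩ := p.2.1 y hy
      rcases Nat.eq_zero_or_pos k with rfl | hk
      · exact absurd (by simpa using hy) p.2.2
      · exact dvd_pow_self m (by omega)
    simp [Nat.mul_div_cancel' this]
end

section
variable {m : ℕ}

lemma count_one_dvd {N : ℕ} (hm : 1 < m) (hN : m ∣ N) (p : N.Partition)
    (hp : ∀ x ∈ p.parts, ∃ k : ℕ, x = m ^ k) : m ∣ Multiset.count 1 p.parts := by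
  classical
  have hsum : Multiset.count 1 p.parts + (p.parts.filter (fun x => ¬ x = 1)).sum = N := by
    have h0 := p.parts_sum
    conv_rhs => rw [← h0, ← Multiset.filter_add_not (fun x => x = 1) p.parts]
    rw [Multiset.sum_add, Multiset.filter_eq', Multiset.sum_replicate, smul_eq_mul, mul_one]
  have h2 : m ∣ (p.parts.filter (fun x => ¬ x = 1)).sum := by
    apply Multiset.dvd_sum
    intro x hx
    obtain ⟨hx1, hx2⟩ := Multiset.mem_filter.mp hx
    obtain ⟨k, rfl⟩ := hp x hx1
    rcases Nat.eq_zero_or_pos k with rfl | hk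
    · simp at hx2
    · exact dvd_pow_self m (by omega)
  exact (Nat.dvd_add_iff_left h2).mpr (hsum.symm ▸ hN)

def addOnesEquiv (n : ℕ) (hm : 1 < m) :
    {p : (m * n).Partition // ∀ x ∈ p.parts, ∃ k : ℕ, x = m ^ k} ≃
    {p : (m * (n + 1)).Partition // (∀ x ∈ p.parts, ∃ k : ℕ, x = m ^ k) ∧ 1 ∈ p.parts} where
  toFun q := ⟨⟨q.1.parts + Multiset.replicate m 1, by
      intro i hi
      rcases Multiset.mem_add.mp hi with h | h
      · exact q.1.parts_pos h
      · rw [Multiset.eq_of_mem_replicate h]; omega, by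
      rw [Multiset.sum_add, q.1.parts_sum, Multiset.sum_replicate, smul_eq_mul, mul_one]; ring⟩, by
    constructor
    · intro x hx
      rcases Multiset.mem_add.mp hx with h | h
      · exact q.2 x h
      · exact ⟨0, by rw [Multiset.eq_of_mem_replicate h, pow_zero]⟩
    · exact Multiset.mem_add.mpr (Or.inr (Multiset.mem_replicate.mpr ⟨by omega, rfl⟩))⟩
  invFun p := by
    have hle : Multiset.replicate m 1 ≤ p.1.parts := by
      rw [← Multiset.le_count_iff_replicate_le]
      have hdvd := count_one_dvd hm ⟨n + 1, rfl⟩ p.1 p.2.1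
      have hpos : 0 < Multiset.count 1 p.1.parts := Multiset.count_pos.mpr p.2.2
      exact Nat.le_of_dvd hpos hdvd
    have hmem : ∀ x ∈ p.1.parts - Multiset.replicate m 1, x ∈ p.1.parts :=
      fun x hx => Multiset.mem_of_le (Multiset.sub_le_self _ _) hx
    refine ⟨⟨p.1.parts - Multiset.replicate m 1, fun {i} hi => p.1.parts_pos (hmem i hi), ?_⟩,
      fun x hx => p.2.1 x (hmem x hx)⟩
    have := tsub_add_cancel_of_le hle
    have hs := congrArg Multiset.sum this
    rw [Multiset.sum_add, p.1.parts_sum, Multiset.sum_replicate, smul_eq_mul, mul_one] at hs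
    have hmn : m * (n + 1) = m * n + m := by ring
    omega
  left_inv q := by
    apply Subtype.ext; apply Nat.Partition.ext
    simp
  right_inv p := by
    apply Subtype.ext; apply Nat.Partition.ext
    have hle : Multiset.replicate m 1 ≤ p.1.parts := by
      rw [← Multiset.le_count_iff_replicate_le]
      have hdvd := count_one_dvd hm ⟨n + 1, rfl⟩ p.1 p.2.1
      have hpos : 0 < Multiset.count 1 p.1.parts := Multiset.count_pos.mpr p.2.2
      exact Nat.le_of_dvd hpos hdvd
    exact tsub_add_cancel_of_le hle
end

theorem mary_mul_eq_sum (m : ℕ) (hm : 1 < m) (n : ℕ) :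
    maryPartitions m (m * n) = ∑ k ∈ Finset.range (n + 1), maryPartitions m k := by
  induction n with
  | zero => simp [maryPartitions]
  | succ n ih =>
    rw [Finset.sum_range_succ, ← ih]
    have key : maryPartitions m (m * (n + 1)) =
        maryPartitions m (m * n) + maryPartitions m (n + 1) := by
      unfold maryPartitions
      rw [card_split (fun p : (m * (n+1)).Partition => ∀ x ∈ p.parts, ∃ k : ℕ, x = m ^ k)
        (fun p => 1 ∈ p.parts)]
      rw [Nat.card_congr (addOnesEquiv n hm).symm, Nat.card_congr (mulEquiv (n+1) hm)]
    rw [key]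
end

section
/- Fix an integer m > 1. The formal power series B₀(q) = ∑_{n≥0} b(m·n) q^n over ℤ satisfies the functional equation (1−q)² · B₀(q) = (1−q^m) · B₀(q^m). -/
open PowerSeries

/-- Substitution of `q^m` for `q` in a formal power series: `F(q) ↦ F(q^m)`. -/
noncomputable def substPow (R : Type*) [Semiring R] (m : ℕ) (F : PowerSeries R) : PowerSeries R :=
  PowerSeries.mk fun n => if m ∣ n then PowerSeries.coeff (R := R) (n / m) F else 0

/-!
Write `b = maryPartitions m` and `B(q) = ∑ b(n) qⁿ`. Recording an `m`-ary partition by the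
multiset of exponents of its parts, one either removes a part `1 = m⁰` or, if there is none,
lowers every exponent by one; this gives `b(n + 1) = b(n) + [m ∣ n + 1] b((n + 1) / m)`, that is
`(1 - q) B(q) = B(qᵐ)`. In particular `b` is constant on each block `mk, …, mk + m - 1`, so
`b(m(k + 1)) - b(mk) = b(k + 1)`, that is `(1 - q) B₀(q) = B(q)`. Hence
`(1 - q)² B₀(q) = (1 - q) B(q) = B(qᵐ) = (1 - qᵐ) B₀(qᵐ)`.
-/

section Combinatorics

variable {m : ℕ}

def maryExponents (m n : ℕ) : Set (Multiset ℕ) :=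
  {e | (e.map (m ^ ·)).sum = n}

def exponentsToMaryPartition (hm : 0 < m) {n : ℕ} (e : maryExponents m n) :
    {p : n.Partition // ∀ x ∈ p.parts, ∃ k : ℕ, x = m ^ k} :=
  ⟨⟨e.1.map (m ^ ·), by simp [pow_pos hm], e.2⟩, fun _ hx => by
    obtain ⟨k, -, rfl⟩ := Multiset.mem_map.mp hx
    exact ⟨k, rfl⟩⟩

theorem exponentsToMaryPartition_bijective (hm : 1 < m) (n : ℕ) :
    (exponentsToMaryPartition (n := n) (by omega : 0 < m)).Bijective := by
  refine ⟨fun e e' h => ?_, fun ⟨p, hp⟩ => ?_⟩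
  · exact Subtype.ext <| Multiset.map_injective (Nat.pow_right_injective hm) <|
      congrArg (fun p => p.1.parts) h
  · have : CanLift ℕ ℕ (m ^ ·) (fun x => ∃ k, x = m ^ k) := ⟨fun _ ⟨k, hk⟩ => ⟨k, hk.symm⟩⟩
    obtain ⟨e, he⟩ : ∃ e : Multiset ℕ, e.map (m ^ ·) = p.parts :=
      CanLift.prf (coe := Multiset.map (m ^ ·)) _ hp
    exact ⟨⟨e, show Multiset.sum _ = n by rw [he, p.parts_sum]⟩,
      Subtype.ext (Nat.Partition.ext he)⟩

theorem maryPartitions_eq_card (hm : 1 < m) (n : ℕ) :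
    maryPartitions m n = Nat.card (maryExponents m n) :=
  (Nat.card_eq_of_bijective _ (exponentsToMaryPartition_bijective hm n)).symm

theorem finite_maryExponents (hm : 1 < m) (n : ℕ) : (maryExponents m n).Finite :=
  Set.finite_coe_iff.mp <| Finite.of_injective _ (exponentsToMaryPartition_bijective hm n).1

theorem coe_maryPartitions (hm : 1 < m) (n : ℕ) :
    (maryPartitions m n : ℕ∞) = (maryExponents m n).encard := by
  rw [maryPartitions_eq_card hm, Nat.card_coe_set_eq, (finite_maryExponents hm n).cast_ncard_eq]

theorem maryExponents_succ_inter_zero_mem (n : ℕ) :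
    maryExponents m (n + 1) ∩ {e | 0 ∈ e} = Multiset.cons 0 '' maryExponents m n := by
  ext e
  constructor
  · rintro ⟨he, h0⟩
    refine ⟨e.erase 0, ?_, Multiset.cons_erase h0⟩
    rw [← Multiset.cons_erase h0] at he
    simpa [maryExponents, add_comm] using he
  · rintro ⟨e, he, rfl⟩
    simp_all [maryExponents, add_comm]

theorem sum_map_pow_map_succ (e : Multiset ℕ) :
    ((e.map Nat.succ).map (m ^ ·)).sum = m * (e.map (m ^ ·)).sum := by
  simp only [Multiset.map_map, Function.comp_def, pow_succ', Multiset.sum_map_mul_left]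

theorem maryExponents_sdiff_zero_mem (N : ℕ) :
    maryExponents m N \ {e | 0 ∈ e} =
      Multiset.map Nat.succ '' {e | m * (e.map (m ^ ·)).sum = N} := by
  ext e
  constructor
  · rintro ⟨he, h0⟩
    have : CanLift ℕ ℕ Nat.succ (· ≠ 0) := ⟨fun n hn => ⟨n.pred, Nat.succ_pred hn⟩⟩
    obtain ⟨e, rfl⟩ : ∃ e' : Multiset ℕ, e'.map Nat.succ = e :=
      CanLift.prf (coe := Multiset.map Nat.succ) _ fun k hk h => h0 (h ▸ hk)
    exact ⟨e, (sum_map_pow_map_succ e).symm.trans he, rfl⟩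
  · rintro ⟨e, he, rfl⟩
    exact ⟨(sum_map_pow_map_succ e).trans he, by simp⟩

theorem encard_setOf_mul_sum_eq (hm : 0 < m) (N : ℕ) :
    {e : Multiset ℕ | m * (e.map (m ^ ·)).sum = N}.encard =
      if m ∣ N then (maryExponents m (N / m)).encard else 0 := by
  split_ifs with h
  · obtain ⟨k, rfl⟩ := h
    simp only [maryExponents, Nat.mul_div_cancel_left _ hm, Nat.mul_left_cancel_iff hm]
  · simp only [Set.encard_eq_zero, Set.eq_empty_iff_forall_notMem, Set.mem_ofPred_eq]
    exact fun e he => h ⟨_, he.symm⟩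

theorem maryPartitions_succ (hm : 1 < m) (n : ℕ) :
    maryPartitions m (n + 1) =
      maryPartitions m n + if m ∣ n + 1 then maryPartitions m ((n + 1) / m) else 0 := by
  apply Nat.cast_injective (R := ℕ∞)
  have hcons : (Multiset.cons (0 : ℕ)).Injective := fun _ _ => (Multiset.cons_inj_right 0).mp
  have hsplit := Set.encard_sdiff_add_encard_inter (maryExponents m (n + 1)) {e | 0 ∈ e}
  rw [maryExponents_sdiff_zero_mem, maryExponents_succ_inter_zero_mem,
    (Multiset.map_injective Nat.succ_injective).encard_image, hcons.encard_image,
    encard_setOf_mul_sum_eq (by omega)] at hsplit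
  rw [Nat.cast_add, coe_maryPartitions hm, coe_maryPartitions hm, ← hsplit, add_comm]
  split_ifs <;> simp [coe_maryPartitions hm]

theorem maryPartitions_mul_add (hm : 1 < m) (k : ℕ) {r : ℕ} (hr : r < m) :
    maryPartitions m (m * k + r) = maryPartitions m (m * k) := by
  induction r with
  | zero => rfl
  | succ r ih =>
    have hndvd : ¬ m ∣ m * k + r + 1 := by
      rw [add_assoc, Nat.dvd_add_right (dvd_mul_right m k)]
      exact Nat.not_dvd_of_pos_of_lt r.succ_pos hr
    rw [← add_assoc, maryPartitions_succ hm, if_neg hndvd, add_zero, ih (by omega)]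

theorem maryPartitions_mul_succ (hm : 1 < m) (k : ℕ) :
    maryPartitions m (m * (k + 1)) = maryPartitions m (m * k) + maryPartitions m (k + 1) := by
  have h : m * (k + 1) = m * k + (m - 1) + 1 := by
    rw [mul_add, mul_one, add_assoc, Nat.sub_add_cancel hm.le]
  rw [h, maryPartitions_succ hm, maryPartitions_mul_add hm k (by omega), ← h,
    if_pos (dvd_mul_right m _), Nat.mul_div_cancel_left _ (by omega)]

end Combinatorics

section GeneratingFunctions

variable {m : ℕ}

theorem coeff_succ_one_sub_X_mul {R : Type*} [Ring R] (F : PowerSeries R) (n : ℕ) :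
    coeff (n + 1) ((1 - X) * F) = coeff (n + 1) F - coeff n F := by
  rw [sub_mul, one_mul, map_sub, coeff_succ_X_mul]

theorem substPow_eq_expand {R : Type*} [CommRing R] (hm : m ≠ 0) (F : PowerSeries R) :
    substPow R m F = expand m hm F := by
  ext n
  rw [substPow, coeff_mk, coeff_expand]

noncomputable def maryPartitionsGenFun (m : ℕ) : PowerSeries ℤ :=
  mk fun n => (maryPartitions m n : ℤ)

theorem one_sub_X_mul_maryPartitionsGenFun (hm : 1 < m) :
    (1 - X) * maryPartitionsGenFun m = expand m (by omega) (maryPartitionsGenFun m) := by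
  ext (_ | n)
  · simp [maryPartitionsGenFun, coeff_expand]
  · rw [coeff_succ_one_sub_X_mul, coeff_expand, maryPartitionsGenFun, coeff_mk, coeff_mk,
      maryPartitions_succ hm]
    split_ifs <;> simp

theorem one_sub_X_mul_mk_maryPartitions_mul (hm : 1 < m) :
    (1 - X) * mk (fun n => (maryPartitions m (m * n) : ℤ)) = maryPartitionsGenFun m := by
  ext (_ | n)
  · simp [maryPartitionsGenFun]
  · rw [coeff_succ_one_sub_X_mul, maryPartitionsGenFun, coeff_mk, coeff_mk, coeff_mk,
      maryPartitions_mul_succ hm]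
    push_cast
    ring

end GeneratingFunctions

theorem B0_functional_equation (m : ℕ) (hm : 1 < m) :
    let B₀ : PowerSeries ℤ := PowerSeries.mk fun n => (maryPartitions m (m * n) : ℤ)
    (1 - X) ^ 2 * B₀ = (1 - X ^ m) * substPow ℤ m B₀ := by
  intro B₀
  rw [substPow_eq_expand (by omega), sq, mul_assoc, one_sub_X_mul_mk_maryPartitions_mul hm,
    one_sub_X_mul_maryPartitionsGenFun hm, ← one_sub_X_mul_mk_maryPartitions_mul hm, map_mul,
    map_sub, map_one, expand_X]
end

section
/- Fix an integer m > 1. For every nonnegative integer i and every j with 0 ≤ j ≤ m−1, the number of gap-free m-ary partitions satisfies c(m·(m·i + j) + 1) ≡ 1 + j·c(m·i + 1) (mod m). -/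
/-!
A gap-free `m`-ary partition of `n ≠ 0` contains the part `1`, and its number of `1`s is
`≡ n [MOD m]`. Removing one `1` therefore shows `c (n + 1) = c n` unless `m ∣ n`, while for
`n = m * t` the partitions of `m * t + 1` with a single `1` are, after deleting the `1` and dividing
the other parts by `m`, the gap-free partitions of `t`: `c (m * t + 1) = c (m * t) + c t`.
So `c` is constant on each block `m * t + 1, …, m * t + m`, whence
`c (m * (s + 1) + 1) = c (m * s + 1) + c (s + 1)`, and `j` such steps from `s = m * i` give
`c (m * (m * i + j) + 1) = c (m * (m * i) + 1) + j * c (m * i + 1)`.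
The case `j = m` yields `c (m * (m * i) + 1) ≡ c 1 = 1` by induction on `i`.
-/

/-- The number of gap-free `m`-ary partitions of `n`: partitions of `n` all of whose
parts are powers of `m`, such that whenever `m^(k+1)` occurs as a part, so does `m^k`. -/
noncomputable def gapFreeMaryPartitions (m n : ℕ) : ℕ :=
  Nat.card {p : n.Partition //
    (∀ x ∈ p.parts, ∃ k : ℕ, x = m ^ k) ∧
    ∀ k : ℕ, m ^ (k + 1) ∈ p.parts → m ^ k ∈ p.parts}

open Multiset

def IsGapFree (m : ℕ) (s : Multiset ℕ) : Prop :=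
  (∀ x ∈ s, ∃ k : ℕ, x = m ^ k) ∧ ∀ k : ℕ, m ^ (k + 1) ∈ s → m ^ k ∈ s

theorem gapFreeMaryPartitions_eq_card (m n : ℕ) :
    gapFreeMaryPartitions m n = Nat.card {p : n.Partition // IsGapFree m p.parts} :=
  rfl

theorem Nat.Partition.parts_ne_zero {n : ℕ} (p : n.Partition) (hn : n ≠ 0) : p.parts ≠ 0 :=
  fun h => hn (by simpa [h] using p.parts_sum.symm)

section
variable {m : ℕ} {s : Multiset ℕ}

theorem count_one_modEq_sum (hs : ∀ x ∈ s, ∃ k : ℕ, x = m ^ k) :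
    s.count 1 ≡ s.sum [MOD m] := by
  induction s using Multiset.induction_on with
  | empty => rfl
  | cons a s ih =>
    rw [forall_mem_cons] at hs
    rw [sum_cons]
    by_cases ha : a = 1
    · rw [ha, count_cons_self, add_comm]
      exact (ih hs.2).add_left 1
    · obtain ⟨k, rfl⟩ := hs.1
      have hk : k ≠ 0 := by rintro rfl; exact ha (pow_zero m)
      have hpow : 0 ≡ m ^ k [MOD m] := (Nat.modEq_zero_iff_dvd.2 (dvd_pow_self m hk)).symm
      rw [count_cons_of_ne (Ne.symm ha)]
      simpa using hpow.add (ih hs.2)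

theorem dvd_of_mem_erase_one (hs : ∀ x ∈ s, ∃ k : ℕ, x = m ^ k)
    (h : s.count 1 = 1) {x : ℕ} (hx : x ∈ s.erase 1) : m ∣ x := by
  obtain ⟨k, rfl⟩ := hs x (mem_of_mem_erase hx)
  refine dvd_pow_self m fun hk => ?_
  have := count_pos.2 hx
  rw [hk, pow_zero, count_erase_self, h] at this
  exact this.ne rfl

namespace IsGapFree

theorem one_mem (hs : IsGapFree m s) (h0 : s ≠ 0) : 1 ∈ s := by
  obtain ⟨x, hx⟩ := exists_mem_of_ne_zero h0
  obtain ⟨k, rfl⟩ := hs.1 x hx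
  induction k with
  | zero => simpa using hx
  | succ k ih => exact ih (hs.2 k hx)

theorem cons_one (hs : IsGapFree m s) : IsGapFree m (1 ::ₘ s) := by
  refine ⟨forall_mem_cons.2 ⟨⟨0, (pow_zero m).symm⟩, hs.1⟩, fun k hk => ?_⟩
  rcases mem_cons.1 hk with h | h
  · obtain rfl : m = 1 := by simpa using Nat.pow_eq_one.1 h
    simp
  · exact mem_cons_of_mem (hs.2 k h)

theorem erase_one (hs : IsGapFree m s) (h1 : 1 ∈ s.erase 1) : IsGapFree m (s.erase 1) := by
  refine ⟨fun x hx => hs.1 x (mem_of_mem_erase hx), fun k hk => ?_⟩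
  by_cases hk1 : m ^ k = 1
  · rwa [hk1]
  · exact (mem_erase_of_ne hk1).2 (hs.2 k (mem_of_mem_erase hk))

end IsGapFree

theorem isGapFree_erase_one_iff (h1 : 1 ∈ s) (h0 : s.erase 1 ≠ 0) :
    IsGapFree m (s.erase 1) ↔ IsGapFree m s ∧ s.count 1 ≠ 1 := by
  refine ⟨fun hs => ⟨cons_erase h1 ▸ hs.cons_one, ?_⟩,
    fun ⟨hs, hc⟩ => hs.erase_one ?_⟩
  · have := count_pos.2 (hs.one_mem h0)
    rw [count_erase_self] at this
    omega
  · have := count_pos.2 h1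
    rw [← count_pos, count_erase_self]
    omega

theorem mul_eq_pow_iff (hm : 1 < m) {x : ℕ} : (∃ k, m * x = m ^ k) ↔ ∃ k, x = m ^ k := by
  constructor
  · rintro ⟨_ | k, hk⟩
    · exact absurd (Nat.eq_one_of_mul_eq_one_right (hk.trans (pow_zero m))) hm.ne'
    · exact ⟨k, Nat.eq_of_mul_eq_mul_left (by omega) (hk.trans (pow_succ' m k))⟩
  · rintro ⟨k, rfl⟩
    exact ⟨k + 1, (pow_succ' m k).symm⟩

theorem pow_succ_mem_one_cons_map_mul_iff (hm : 1 < m) (k : ℕ) :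
    m ^ (k + 1) ∈ 1 ::ₘ s.map (m * ·) ↔ m ^ k ∈ s := by
  simp [pow_succ', hm.ne', Nat.mul_left_cancel_iff (by omega : 0 < m)]

theorem isGapFree_one_cons_map_mul_iff (hm : 1 < m) :
    IsGapFree m (1 ::ₘ s.map (m * ·)) ↔ IsGapFree m s := by
  simp only [IsGapFree, forall_mem_cons, forall_mem_map_iff, mul_eq_pow_iff hm,
    pow_succ_mem_one_cons_map_mul_iff hm]
  refine and_congr (and_iff_right ⟨0, (pow_zero m).symm⟩)
    ⟨fun h k hk => ?_, fun h k hk => ?_⟩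
  · exact (pow_succ_mem_one_cons_map_mul_iff hm k).1 (h (k + 1) hk)
  · cases k with
    | zero => exact mem_cons_self 1 _
    | succ k => exact (pow_succ_mem_one_cons_map_mul_iff hm k).2 (h k hk)

end

namespace Nat.Partition

def mulAddOneEquiv {m : ℕ} (hm : 1 < m) (t : ℕ) :
    t.Partition ≃ {p : (m * t + 1).Partition //
      p.parts.count 1 = 1 ∧ ∀ x ∈ p.parts.erase 1, m ∣ x} where
  toFun q :=
    ⟨{ parts := 1 ::ₘ q.parts.map (m * ·)
       parts_pos := by
         simp only [mem_cons, mem_map]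
         rintro _ (rfl | ⟨y, hy, rfl⟩)
         exacts [one_pos, Nat.mul_pos (by omega) (q.parts_pos hy)]
       parts_sum := by rw [sum_cons, sum_map_mul_left, map_id', q.parts_sum, add_comm] },
     by
       rw [count_cons_self, add_eq_right, count_eq_zero, mem_map]
       rintro ⟨y, hy, hy1⟩
       exact hm.ne' (Nat.eq_one_of_mul_eq_one_right hy1),
     by
       rw [erase_cons_head]
       simp only [mem_map]
       rintro _ ⟨y, -, rfl⟩
       exact dvd_mul_right m y⟩
  invFun p :=
    { parts := (p.1.parts.erase 1).map (· / m)
      parts_pos := by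
        simp only [mem_map]
        rintro _ ⟨x, hx, rfl⟩
        exact Nat.div_pos (Nat.le_of_dvd (p.1.parts_pos (mem_of_mem_erase hx)) (p.2.2 x hx))
          (by omega)
      parts_sum := by
        have h1 : 1 ∈ p.1.parts := count_pos.1 (by omega)
        have hsum := p.1.parts_sum
        rw [← cons_erase h1, sum_cons] at hsum
        refine Nat.eq_of_mul_eq_mul_left (by omega : 0 < m) ?_
        rw [← sum_map_mul_left, map_congr rfl fun x hx => Nat.mul_div_cancel' (p.2.2 x hx),
          map_id']
        omega }
  left_inv q := by
    ext1
    simp only [erase_cons_head, map_map]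
    exact (map_congr rfl fun x _ => Nat.mul_div_cancel_left x (by omega)).trans (map_id _)
  right_inv p := by
    ext1; ext1
    simp only [map_map, Function.comp_def]
    rw [map_congr rfl fun x hx => Nat.mul_div_cancel' (p.2.2 x hx), map_id',
      cons_erase (count_pos.1 (by omega))]

end Nat.Partition

section
variable {m : ℕ}

theorem card_gapFree_count_one_ne_one {n : ℕ} (hn : n ≠ 0) :
    Nat.card {p : {p : (n + 1).Partition // IsGapFree m p.parts} // p.1.parts.count 1 ≠ 1} =
      gapFreeMaryPartitions m n := calc
  _ = Nat.card {p : (n + 1).Partition // IsGapFree m p.parts ∧ p.parts.count 1 ≠ 1} :=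
    Nat.card_congr (Equiv.subtypeSubtypeEquivSubtypeInter _ _)
  _ = Nat.card {p : {p : (n + 1).Partition // 1 ∈ p.parts} //
        IsGapFree m p.1.parts ∧ p.1.parts.count 1 ≠ 1} :=
    Nat.card_congr (Equiv.subtypeSubtypeEquivSubtype fun hp =>
      hp.1.one_mem (Nat.Partition.parts_ne_zero _ (by omega))).symm
  _ = Nat.card {q : n.Partition // IsGapFree m q.parts} := by
    refine Nat.card_congr (Equiv.subtypeEquiv
      (Nat.Partition.partitionWithPartEquiv (n := n + 1) le_rfl (by omega)) fun p => ?_)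
    have h0 : p.1.parts.erase 1 ≠ 0 :=
      (Nat.Partition.partitionWithPartEquiv (n := n + 1) le_rfl (by omega) p).parts_ne_zero hn
    rw [Nat.Partition.partitionWithPartEquiv_apply_parts]
    exact (isGapFree_erase_one_iff p.2 h0).symm

theorem card_gapFree_count_one_eq_one (hm : 1 < m) (t : ℕ) :
    Nat.card {p : {p : (m * t + 1).Partition // IsGapFree m p.parts} // p.1.parts.count 1 = 1} =
      gapFreeMaryPartitions m t := calc
  _ = Nat.card {p : (m * t + 1).Partition // IsGapFree m p.parts ∧ p.parts.count 1 = 1} :=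
    Nat.card_congr (Equiv.subtypeSubtypeEquivSubtypeInter _ _)
  _ = Nat.card {p : (m * t + 1).Partition //
        (p.parts.count 1 = 1 ∧ ∀ x ∈ p.parts.erase 1, m ∣ x) ∧ IsGapFree m p.parts} := by
    refine Nat.card_congr (Equiv.subtypeEquivRight fun p => ⟨fun ⟨hp, h1⟩ => ?_, ?_⟩)
    · exact ⟨⟨h1, fun x hx => dvd_of_mem_erase_one hp.1 h1 hx⟩, hp⟩
    · exact fun ⟨⟨h1, _⟩, hp⟩ => ⟨hp, h1⟩
  _ = Nat.card {p : {p : (m * t + 1).Partition //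
        p.parts.count 1 = 1 ∧ ∀ x ∈ p.parts.erase 1, m ∣ x} // IsGapFree m p.1.parts} :=
    Nat.card_congr (Equiv.subtypeSubtypeEquivSubtypeInter _ _).symm
  _ = Nat.card {q : t.Partition // IsGapFree m q.parts} :=
    Nat.card_congr (Equiv.subtypeEquiv (Nat.Partition.mulAddOneEquiv hm t) fun _ =>
      (isGapFree_one_cons_map_mul_iff hm).symm).symm

theorem gapFreeMaryPartitions_succ {n : ℕ} (hn : n ≠ 0) :
    gapFreeMaryPartitions m (n + 1) = gapFreeMaryPartitions m n +
      Nat.card {p : {p : (n + 1).Partition // IsGapFree m p.parts} // p.1.parts.count 1 = 1} := by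
  rw [gapFreeMaryPartitions_eq_card,
    ← Nat.card_congr (Equiv.sumCompl fun p => p.1.parts.count 1 ≠ 1), Nat.card_sum,
    card_gapFree_count_one_ne_one hn]
  simp only [not_not]

theorem gapFreeMaryPartitions_one : gapFreeMaryPartitions m 1 = 1 := by
  rw [gapFreeMaryPartitions_eq_card, Nat.card_congr (Equiv.subtypeUnivEquiv fun p => ?_),
    Nat.card_unique]
  rw [Nat.Partition.partition_one_parts, ← cons_zero]
  exact IsGapFree.cons_one ⟨by simp, by simp⟩

theorem gapFreeMaryPartitions_succ_of_not_dvd {n : ℕ} (hn : ¬m ∣ n) :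
    gapFreeMaryPartitions m (n + 1) = gapFreeMaryPartitions m n := by
  have : IsEmpty
      {p : {p : (n + 1).Partition // IsGapFree m p.parts} // p.1.parts.count 1 = 1} := by
    refine ⟨fun p => hn ?_⟩
    have h := count_one_modEq_sum p.1.2.1
    rw [p.2, p.1.1.parts_sum, ← zero_add 1] at h
    exact Nat.modEq_zero_iff_dvd.1 (Nat.ModEq.add_right_cancel' 1 h).symm
  rw [gapFreeMaryPartitions_succ (by rintro rfl; exact hn (dvd_zero m)), Nat.card_of_isEmpty,
    add_zero]

theorem gapFreeMaryPartitions_mul_add_one (hm : 1 < m) {t : ℕ} (ht : t ≠ 0) :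
    gapFreeMaryPartitions m (m * t + 1) =
      gapFreeMaryPartitions m (m * t) + gapFreeMaryPartitions m t := by
  rw [gapFreeMaryPartitions_succ (Nat.mul_ne_zero (by omega) ht), card_gapFree_count_one_eq_one hm]

theorem gapFreeMaryPartitions_mul_add_of_le (t : ℕ) {r : ℕ} (hr : 1 ≤ r) (hrm : r ≤ m) :
    gapFreeMaryPartitions m (m * t + r) = gapFreeMaryPartitions m (m * t + 1) := by
  induction r, hr using Nat.le_induction with
  | base => rfl
  | succ r hr ih =>
    have hndvd : ¬m ∣ m * t + r := by
      rw [Nat.dvd_add_right (dvd_mul_right m t)]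
      exact Nat.not_dvd_of_pos_of_lt hr (by omega)
    rw [← add_assoc, gapFreeMaryPartitions_succ_of_not_dvd hndvd, ih (by omega)]

theorem gapFreeMaryPartitions_mul_succ_add_one (hm : 1 < m) (t : ℕ) :
    gapFreeMaryPartitions m (m * (t + 1) + 1) =
      gapFreeMaryPartitions m (m * t + 1) + gapFreeMaryPartitions m (t + 1) := by
  rw [gapFreeMaryPartitions_mul_add_one hm (by omega : t + 1 ≠ 0), mul_add_one,
    gapFreeMaryPartitions_mul_add_of_le t (by omega) le_rfl]

theorem gapFreeMaryPartitions_mul_add_add_one (hm : 1 < m) (i j : ℕ) (hj : j ≤ m) :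
    gapFreeMaryPartitions m (m * (m * i + j) + 1) =
      gapFreeMaryPartitions m (m * (m * i) + 1) + j * gapFreeMaryPartitions m (m * i + 1) := by
  induction j with
  | zero => simp
  | succ j ih =>
    rw [← add_assoc, gapFreeMaryPartitions_mul_succ_add_one hm, ih (by omega), add_assoc (m * i),
      gapFreeMaryPartitions_mul_add_of_le i (by omega) hj]
    ring

theorem gapFreeMaryPartitions_mul_mul_add_one_modEq (hm : 1 < m) (i : ℕ) :
    gapFreeMaryPartitions m (m * (m * i) + 1) ≡ 1 [MOD m] := by
  induction i with
  | zero => rw [mul_zero, mul_zero, zero_add, gapFreeMaryPartitions_one]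
  | succ i ih =>
    rw [mul_add_one m i, gapFreeMaryPartitions_mul_add_add_one hm i m le_rfl]
    simpa [Nat.ModEq, Nat.add_mul_mod_self_left] using ih

end

theorem gapFree_mod_m (m : ℕ) (hm : 1 < m) (i j : ℕ) (hj : j ≤ m - 1) :
    gapFreeMaryPartitions m (m * (m * i + j) + 1) ≡
      1 + j * gapFreeMaryPartitions m (m * i + 1) [MOD m] := by
  rw [gapFreeMaryPartitions_mul_add_add_one hm i j (by omega)]
  exact (gapFreeMaryPartitions_mul_mul_add_one_modEq hm i).add_right _
end

section
/- Fix an integer m > 1. Let C(q) = ∑_{n≥0} c(n) q^n be the unique formal power series over ℤ satisfying (1−q)·C(q) = (1−q) + q·C(q^m). Then for every integer n ≥ 1, c(m·n) = c(m·(n−1) + 1). -/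
open PowerSeries

/-!
Comparing coefficients of `q^(j+1)` in `(1 - q) C(q) = (1 - q) + q C(q^m)` gives
`c(j+1) - c(j) = [m ∣ j] c(j/m)` for every `j` (the constant `1 - q` only contributes at `j = 0`,
where `m ∣ j` anyway). So `c` is constant on each block `m(n-1)+1, …, mn`, which contains no
multiple of `m` before its last element.
-/

theorem coeff_substPow {R : Type*} [Semiring R] (m n : ℕ) (F : PowerSeries R) :
    coeff n (substPow R m F) = if m ∣ n then coeff (n / m) F else 0 :=
  coeff_mk _ _

section

variable {R : Type*} [Ring R] {m : ℕ} {C : PowerSeries R}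

theorem coeff_succ_eq_of_not_dvd (hC : (1 - X) * C = (1 - X) + X * substPow R m C) {j : ℕ}
    (hj : ¬ m ∣ j) : coeff (j + 1) C = coeff j C := by
  have hj0 : j ≠ 0 := by rintro rfl; exact hj (dvd_zero m)
  have h := congrArg (coeff (j + 1)) hC
  rw [sub_mul, one_mul, map_sub, map_add, map_sub, coeff_succ_X_mul, coeff_succ_X_mul,
    coeff_substPow, if_neg hj, coeff_one, if_neg j.succ_ne_zero, coeff_X,
    if_neg (by omega)] at h
  simpa [sub_eq_zero] using h

theorem coeff_eq_of_forall_not_dvd (hC : (1 - X) * C = (1 - X) + X * substPow R m C)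
    {a b : ℕ} (hab : a ≤ b) (hdvd : ∀ j, a ≤ j → j < b → ¬ m ∣ j) : coeff b C = coeff a C := by
  induction b, hab using Nat.le_induction with
  | base => rfl
  | succ b hab ih =>
    rw [coeff_succ_eq_of_not_dvd hC (hdvd b hab b.lt_succ_self)]
    exact ih fun j hj hjb => hdvd j hj (hjb.trans b.lt_succ_self)

end

theorem noGap_shift (m : ℕ) (hm : 1 < m) (C : PowerSeries ℤ)
    (hC : (1 - X) * C = (1 - X) + X * substPow ℤ m C) (c : ℕ → ℤ)
    (hc : ∀ n, c n = PowerSeries.coeff (R := ℤ) n C) (n : ℕ) (hn : 1 ≤ n) :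
    c (m * n) = c (m * (n - 1) + 1) := by
  obtain ⟨k, rfl⟩ : ∃ k, n = k + 1 := ⟨n - 1, by omega⟩
  rw [hc, hc, Nat.add_sub_cancel, mul_add_one]
  refine coeff_eq_of_forall_not_dvd hC (by omega) fun j hj hjb => ?_
  obtain ⟨r, rfl⟩ : ∃ r, j = m * k + r := ⟨j - m * k, by omega⟩
  rw [Nat.dvd_add_right (dvd_mul_right m k)]
  exact Nat.not_dvd_of_pos_of_lt (by omega) (by omega)
end

section
/- Fix an integer m > 1. Let C(q) = ∑_{n≥0} c(n) q^n be the unique formal power series over ℤ satisfying (1−q)·C(q) = (1−q) + q·C(q^m). Then for every nonnegative integer n, c(m·n + 1) = ∑_{k=0}^{n} c(k). -/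
open PowerSeries

/-! Multiplying the functional equation by `(1 - q)⁻¹ = ∑ qⁿ` gives `C = 1 + q · C(q^m) · ∑ qⁿ`,
so `c(N + 1)` is the sum of the first `N + 1` coefficients of `C(q^m)`. For `N = m n` the nonzero
ones among them are `c(0), …, c(n)`. -/

open Finset (range mem_filter mem_range)

theorem coeff_succ_eq_sum_range_of_one_sub_X_mul {R : Type*} [CommRing R] {C S : R⟦X⟧}
    (h : (1 - X) * C = (1 - X) + X * S) (N : ℕ) :
    coeff (N + 1) C = ∑ i ∈ range (N + 1), coeff i S := by
  have hC : C = 1 + X * (S * mk 1) :=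
    calc C = mk 1 * (1 - X) * C := by rw [mk_one_mul_one_sub_eq_one, one_mul]
      _ = mk 1 * (1 - X) + X * (S * mk 1) := by rw [mul_assoc, h]; ring
      _ = 1 + X * (S * mk 1) := by rw [mk_one_mul_one_sub_eq_one]
  rw [hC, map_add, coeff_one, if_neg N.succ_ne_zero, zero_add, coeff_succ_X_mul, coeff_mul,
    Finset.Nat.sum_antidiagonal_eq_sum_range_succ_mk]
  simp

theorem sum_range_coeff_substPow {R : Type*} [Semiring R] {m : ℕ} (hm : 0 < m) (F : R⟦X⟧)
    (n : ℕ) : ∑ i ∈ range (m * n + 1), coeff i (substPow R m F) =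
      ∑ j ∈ range (n + 1), coeff j F := by
  simp only [substPow, coeff_mk]
  rw [← Finset.sum_filter]
  refine Finset.sum_nbij' (· / m) (m * ·) ?_ ?_ ?_ ?_ fun _ _ => rfl
  · intro i hi
    simp only [mem_filter, mem_range] at hi ⊢
    obtain ⟨hi, j, rfl⟩ := hi
    rw [Nat.mul_div_cancel_left j hm]
    nlinarith
  · intro j hj
    simp only [mem_filter, mem_range] at hj ⊢
    exact ⟨by nlinarith, dvd_mul_right m j⟩
  · intro i hi
    exact Nat.mul_div_cancel' (mem_filter.mp hi).2
  · intro j _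
    exact Nat.mul_div_cancel_left j hm

theorem noGap_sum (m : ℕ) (hm : 1 < m) (C : PowerSeries ℤ)
    (hC : (1 - X) * C = (1 - X) + X * substPow ℤ m C) (c : ℕ → ℤ)
    (hc : ∀ n, c n = PowerSeries.coeff (R := ℤ) n C) (n : ℕ) :
    c (m * n + 1) = ∑ k ∈ Finset.range (n + 1), c k := by
  simp only [hc]
  rw [coeff_succ_eq_sum_range_of_one_sub_X_mul hC, sum_range_coeff_substPow (by omega) C n]
end
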